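/- arXiv:2110.06559 — 3 statements merged into one kernel-verified Lean document; each statement's English description precedes it below -/
import Mathlib

section
/- The Arete(α, θ, λ) distribution is infinitely divisible: for any n, if X_{1i}, X_{2i} ~ Gamma(α/n, θ) and Y_{1i}, Y_{2i} ~ Gamma(1/n, λ) are 4n independent random variables, then ∑_{i=1}^n (X_{1i} - X_{2i} + Y_{1i} - Y_{2i}) has the Arete(α, θ, λ) distribution. -/
/-!
Gamma laws with a common rate convolve by adding their shapes, so each of the four blocks of `n`
independent `Gamma(·/n)` variables sums to a variable with the law of the corresponding `W k`.
Grouping an independent family into blocks keeps it independent, hence the four block sums have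
the joint law of `W`, and the Arete variable is the same function of both.

The convolution identity is proved on densities: the substitution `y = z t` shows that
`gammaPDF a r ⋆ gammaPDF b r` is a constant multiple of `gammaPDF (a + b) r`, and the constant is
`1` because both sides are probability densities.
-/

open MeasureTheory ProbabilityTheory

open Set Real
open scoped ENNReal

lemma lintegral_eq_ofReal_mul_lintegral_comp_mul_left {c : ℝ} (hc : 0 < c)
    {f : ℝ → ℝ≥0∞} (hf : Measurable f) :
    ∫⁻ y, f y = ENNReal.ofReal c * ∫⁻ t, f (c * t) := by
  rw [← lintegral_map hf (measurable_const_mul c), Real.map_volume_mul_left hc.ne',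
    lintegral_smul_measure, smul_eq_mul, ← mul_assoc, ← ENNReal.ofReal_mul hc.le,
    abs_of_pos (inv_pos.mpr hc), mul_inv_cancel₀ hc.ne', ENNReal.ofReal_one, one_mul]

lemma setLIntegral_Icc_rpow_mul_sub_rpow (a b : ℝ) {z : ℝ} (hz : 0 < z) :
    ∫⁻ y in Icc 0 z, ENNReal.ofReal (y ^ (a - 1) * (z - y) ^ (b - 1)) =
      ENNReal.ofReal (z ^ (a + b - 1)) *
        ∫⁻ t in Icc 0 1, ENNReal.ofReal (t ^ (a - 1) * (1 - t) ^ (b - 1)) := by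
  have hscale : ∀ t,
      (Icc 0 z).indicator (fun y ↦ ENNReal.ofReal (y ^ (a - 1) * (z - y) ^ (b - 1))) (z * t) =
        ENNReal.ofReal (z ^ (a + b - 2)) *
          (Icc 0 1).indicator (fun t ↦ ENNReal.ofReal (t ^ (a - 1) * (1 - t) ^ (b - 1))) t := by
    intro t
    have hmem : z * t ∈ Icc 0 z ↔ t ∈ Icc 0 1 := by
      simp only [mem_Icc, mul_nonneg_iff_of_pos_left hz, mul_le_iff_le_one_right hz]
    by_cases ht : t ∈ Icc (0 : ℝ) 1
    · rw [indicator_of_mem (hmem.mpr ht), indicator_of_mem ht,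
        ← ENNReal.ofReal_mul (by positivity), mul_rpow hz.le ht.1,
        show z - z * t = z * (1 - t) by ring, mul_rpow hz.le (sub_nonneg.mpr ht.2),
        show a + b - 2 = (a - 1) + (b - 1) by ring, rpow_add hz]
      ring_nf
    · rw [indicator_of_notMem (mt hmem.mp ht), indicator_of_notMem ht, mul_zero]
  rw [← lintegral_indicator measurableSet_Icc, ← lintegral_indicator measurableSet_Icc,
    lintegral_eq_ofReal_mul_lintegral_comp_mul_left hz
      ((by fun_prop : Measurable _).indicator measurableSet_Icc),
    lintegral_congr hscale, lintegral_const_mul' _ _ ENNReal.ofReal_ne_top, ← mul_assoc,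
    ← ENNReal.ofReal_mul hz.le, show a + b - 1 = 1 + (a + b - 2) by ring, rpow_add hz, rpow_one]

namespace ProbabilityTheory

section GammaConvolution

variable {a b r : ℝ}

lemma gammaPDF_mul_gammaPDF_sub (ha : 0 < a) (hb : 0 < b) (hr : 0 < r) (z y : ℝ) :
    gammaPDF a r y * gammaPDF b r (z - y) =
      ENNReal.ofReal (r ^ a / Gamma a * (r ^ b / Gamma b) * exp (-(r * z))) *
        (Icc 0 z).indicator (fun y ↦ ENNReal.ofReal (y ^ (a - 1) * (z - y) ^ (b - 1))) y := by
  by_cases hy : y ∈ Icc 0 z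
  · have hexp : exp (-(r * z)) = exp (-(r * y)) * exp (-(r * (z - y))) := by
      rw [← exp_add]; ring_nf
    have := Gamma_pos_of_pos ha
    have := Gamma_pos_of_pos hb
    have := rpow_nonneg hy.1 (a - 1)
    rw [gammaPDF_of_nonneg hy.1, gammaPDF_of_nonneg (sub_nonneg.mpr hy.2), indicator_of_mem hy,
      ← ENNReal.ofReal_mul (by positivity), ← ENNReal.ofReal_mul (by positivity), hexp]
    ring_nf
  · rw [indicator_of_notMem hy, mul_zero]
    rcases not_and_or.mp hy with hy | hy
    · rw [gammaPDF_of_neg (not_le.mp hy), zero_mul]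
    · rw [gammaPDF_of_neg (sub_neg.mpr (not_le.mp hy)), mul_zero]

lemma exists_lconvolution_gammaPDF_ae_eq_smul (ha : 0 < a) (hb : 0 < b) (hr : 0 < r) :
    ∃ c : ℝ≥0∞, gammaPDF a r ⋆ₗ gammaPDF b r =ᵐ[volume] c • gammaPDF (a + b) r := by
  set B := ∫⁻ t in Icc 0 1, ENNReal.ofReal (t ^ (a - 1) * (1 - t) ^ (b - 1))
  refine ⟨ENNReal.ofReal (Gamma (a + b) / (Gamma a * Gamma b)) * B, ?_⟩
  have hconv : ∀ z, (gammaPDF a r ⋆ₗ gammaPDF b r) z =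
      ENNReal.ofReal (r ^ a / Gamma a * (r ^ b / Gamma b) * exp (-(r * z))) *
        ∫⁻ y in Icc 0 z, ENNReal.ofReal (y ^ (a - 1) * (z - y) ^ (b - 1)) := by
    intro z
    simp_rw [lconvolution_def, neg_add_eq_sub, gammaPDF_mul_gammaPDF_sub ha hb hr z]
    rw [lintegral_const_mul' _ _ ENNReal.ofReal_ne_top, lintegral_indicator measurableSet_Icc]
  filter_upwards [compl_mem_ae_iff.mpr (measure_singleton (0 : ℝ))] with z hz
  rcases lt_or_gt_of_ne (show z ≠ 0 from hz) with hz | hz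
  · simp [hconv, Icc_eq_empty_of_lt hz, gammaPDF_of_neg hz]
  · have := Gamma_pos_of_pos ha
    have := Gamma_pos_of_pos hb
    have := Gamma_pos_of_pos (add_pos ha hb)
    rw [hconv, setLIntegral_Icc_rpow_mul_sub_rpow a b hz, Pi.smul_apply, smul_eq_mul,
      gammaPDF_of_nonneg hz.le, mul_right_comm _ B, ← mul_assoc,
      ← ENNReal.ofReal_mul (by positivity), ← ENNReal.ofReal_mul (by positivity), rpow_add hr]
    congr 2
    field_simp

lemma gammaMeasure_conv_gammaMeasure (ha : 0 < a) (hb : 0 < b) (hr : 0 < r) :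
    gammaMeasure a r ∗ gammaMeasure b r = gammaMeasure (a + b) r := by
  obtain ⟨c, hc⟩ := exists_lconvolution_gammaPDF_ae_eq_smul ha hb hr
  have hpdf : ∀ a, Measurable (gammaPDF a r) :=
    fun a ↦ (measurable_gammaPDFReal a r).ennreal_ofReal
  have hconv : gammaMeasure a r ∗ gammaMeasure b r = c • gammaMeasure (a + b) r := by
    rw [gammaMeasure, gammaMeasure, conv_withDensity_eq_lconvolution (hpdf a) (hpdf b),
      withDensity_congr_ae hc, withDensity_smul c (hpdf _), gammaMeasure]
  have := isProbabilityMeasure_gammaMeasure ha hr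
  have := isProbabilityMeasure_gammaMeasure hb hr
  have := isProbabilityMeasure_gammaMeasure (add_pos ha hb) hr
  have hc : 1 = c := by simpa using congrArg (· univ) hconv
  rw [hconv, ← hc, one_smul]

end GammaConvolution

variable {Ω : Type*} [MeasurableSpace Ω] {P : Measure Ω}

lemma iIndepFun.curry {ι κ 𝓧 : Type*} [MeasurableSpace 𝓧] {X : ι → κ → Ω → 𝓧}
    (hX : ∀ i j, Measurable (X i j)) (h : iIndepFun (fun p : ι × κ ↦ X p.1 p.2) P) :
    iIndepFun (fun i ω j ↦ X i j ω) P := by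
  have := h.isProbabilityMeasure
  have _ i j := Measure.isProbabilityMeasure_map (μ := P) (hX i j).aemeasurable
  have hrow : ∀ i, iIndepFun (X i) P :=
    fun i ↦ h.precomp (g := Prod.mk i) (Prod.mk_right_injective i)
  rw [iIndepFun_iff_map_fun_eq_infinitePi_map (fun i ↦ by fun_prop)]
  simp_rw [(hrow _).map_fun_eq_infinitePi_map (hX _)]
  rw [← Measure.infinitePi_map_curry, ← h.map_fun_eq_infinitePi_map (fun p ↦ hX _ _),
    Measure.map_map (by fun_prop) (by fun_prop)]
  rfl

lemma iIndepFun.curry_sum {ι κ M : Type*} [Fintype κ] [AddCommMonoid M] [MeasurableSpace M]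
    [MeasurableAdd₂ M] {X : ι → κ → Ω → M}
    (hX : ∀ i j, Measurable (X i j)) (h : iIndepFun (fun p : ι × κ ↦ X p.1 p.2) P) :
    iIndepFun (fun i ↦ ∑ j, X i j) P := by
  convert (iIndepFun.curry hX h).comp (fun _ v ↦ ∑ j, v j)
    fun _ ↦ Finset.measurable_sum _ fun j _ ↦ measurable_pi_apply j using 1
  ext i ω
  simp

lemma map_comp_eq_of_iIndepFun {ι 𝓧 β : Type*} [MeasurableSpace 𝓧] [MeasurableSpace β]
    {f : (ι → 𝓧) → β} (hf : Measurable f) {X Y : ι → Ω → 𝓧}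
    (hX : ∀ i, Measurable (X i)) (hY : ∀ i, Measurable (Y i))
    (hXindep : iIndepFun X P) (hYindep : iIndepFun Y P) (hXY : ∀ i, P.map (X i) = P.map (Y i)) :
    P.map (fun ω ↦ f fun i ↦ X i ω) = P.map (fun ω ↦ f fun i ↦ Y i ω) := by
  change P.map (f ∘ fun ω i ↦ X i ω) = P.map (f ∘ fun ω i ↦ Y i ω)
  rw [← Measure.map_map hf (measurable_pi_lambda _ hX),
    ← Measure.map_map hf (measurable_pi_lambda _ hY), hXindep.map_fun_eq_infinitePi_map hX,
    hYindep.map_fun_eq_infinitePi_map hY]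
  simp_rw [hXY]

lemma iIndepFun.map_finsetSum_eq_gammaMeasure {ι : Type*} {X : ι → Ω → ℝ}
    (hX : ∀ i, Measurable (X i)) (h : iIndepFun X P) {a : ι → ℝ} {r : ℝ} (hr : 0 < r)
    {s : Finset ι} (hs : s.Nonempty) (ha : ∀ i ∈ s, 0 < a i)
    (hlaw : ∀ i ∈ s, P.map (X i) = gammaMeasure (a i) r) :
    P.map (∑ i ∈ s, X i) = gammaMeasure (∑ i ∈ s, a i) r := by
  have := h.isProbabilityMeasure
  induction hs using Finset.Nonempty.cons_induction with
  | singleton i => simpa using hlaw i (by simp)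
  | cons i s hi hs ih =>
    simp only [Finset.mem_cons, forall_eq_or_imp] at ha hlaw
    rw [Finset.sum_cons, Finset.sum_cons, add_comm (X i), add_comm (a i),
      (h.indepFun_finsetSum_of_notMem hX hi).map_add_eq_map_conv_map (by fun_prop) (hX i),
      ih ha.2 hlaw.2, hlaw.1, gammaMeasure_conv_gammaMeasure (Finset.sum_pos ha.2 hs) ha.1 hr]

lemma iIndepFun.map_sum_eq_gammaMeasure {n : ℕ} (hn : 0 < n) {X : Fin n → Ω → ℝ}
    (hX : ∀ i, Measurable (X i)) (h : iIndepFun X P) {a r : ℝ} (ha : 0 < a) (hr : 0 < r)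
    (hlaw : ∀ i, P.map (X i) = gammaMeasure (a / n) r) :
    P.map (∑ i, X i) = gammaMeasure a r := by
  have hn' : (0 : ℝ) < n := by exact_mod_cast hn
  rw [h.map_finsetSum_eq_gammaMeasure hX hr (Finset.univ_nonempty_iff.mpr ⟨⟨0, hn⟩⟩)
    (fun _ _ ↦ div_pos ha hn') (fun i _ ↦ hlaw i), Finset.sum_const, Finset.card_univ,
    Fintype.card_fin, nsmul_eq_mul, mul_div_cancel₀ _ hn'.ne']

end ProbabilityTheory

-- `gammaMeasure a r` has rate `r`, so Gamma with scale `θ` is `gammaMeasure a θ⁻¹`.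
theorem arete_infinitely_divisible_general
    {Ω : Type*} [MeasurableSpace Ω] (P : Measure Ω)
    (α θ lam : ℝ) (hα : 0 < α) (hθ : 0 < θ) (hlam : 0 < lam) (n : ℕ) (hn : 0 < n)
    (Z : (Fin n ⊕ Fin n ⊕ Fin n ⊕ Fin n) → Ω → ℝ)
    (hZmeas : ∀ i, Measurable (Z i))
    (hZindep : iIndepFun Z P)
    (hZdist₁ : ∀ i : Fin n, P.map (Z (Sum.inl i)) = gammaMeasure (α / n) θ⁻¹)
    (hZdist₂ : ∀ i : Fin n, P.map (Z (Sum.inr (Sum.inl i))) = gammaMeasure (α / n) θ⁻¹)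
    (hZdist₃ : ∀ i : Fin n,
      P.map (Z (Sum.inr (Sum.inr (Sum.inl i)))) = gammaMeasure (1 / n) lam⁻¹)
    (hZdist₄ : ∀ i : Fin n,
      P.map (Z (Sum.inr (Sum.inr (Sum.inr i)))) = gammaMeasure (1 / n) lam⁻¹)
    (W : Fin 4 → Ω → ℝ)
    (hWmeas : ∀ i, Measurable (W i))
    (hWindep : iIndepFun W P)
    (hW₀ : P.map (W 0) = gammaMeasure α θ⁻¹)
    (hW₁ : P.map (W 1) = gammaMeasure α θ⁻¹)
    (hW₂ : P.map (W 2) = gammaMeasure 1 lam⁻¹)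
    (hW₃ : P.map (W 3) = gammaMeasure 1 lam⁻¹) :
    P.map (fun ω => ∑ i : Fin n,
        (Z (Sum.inl i) ω - Z (Sum.inr (Sum.inl i)) ω +
          (Z (Sum.inr (Sum.inr (Sum.inl i))) ω - Z (Sum.inr (Sum.inr (Sum.inr i))) ω))) =
    P.map (fun ω => W 0 ω - W 1 ω + (W 2 ω - W 3 ω)) := by
  let block : Fin 4 → Fin n → Fin n ⊕ Fin n ⊕ Fin n ⊕ Fin n :=
    ![Sum.inl, Sum.inr ∘ Sum.inl, Sum.inr ∘ Sum.inr ∘ Sum.inl,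
      Sum.inr ∘ Sum.inr ∘ Sum.inr]
  have hblock : Function.Injective fun p : Fin 4 × Fin n ↦ block p.1 p.2 := by
    rintro ⟨k, i⟩ ⟨l, j⟩ h
    fin_cases k <;> fin_cases l <;> simp_all [block]
  let S : Fin 4 → Ω → ℝ := fun k ↦ ∑ i, Z (block k i)
  have hSindep : iIndepFun S P :=
    iIndepFun.curry_sum (X := fun k i ↦ Z (block k i)) (fun _ _ ↦ hZmeas _)
      (hZindep.precomp hblock)
  have hSlaw : ∀ k, P.map (S k) = P.map (W k) := by
    intro k
    have hrow := (hZindep.precomp hblock).precomp (Prod.mk_right_injective k)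
    have hZ : ∀ i, Measurable (Z (block k i)) := fun _ ↦ hZmeas _
    fin_cases k
    · exact hW₀ ▸ hrow.map_sum_eq_gammaMeasure hn hZ hα (inv_pos.mpr hθ) hZdist₁
    · exact hW₁ ▸ hrow.map_sum_eq_gammaMeasure hn hZ hα (inv_pos.mpr hθ) hZdist₂
    · exact hW₂ ▸ hrow.map_sum_eq_gammaMeasure hn hZ one_pos (inv_pos.mpr hlam) hZdist₃
    · exact hW₃ ▸ hrow.map_sum_eq_gammaMeasure hn hZ one_pos (inv_pos.mpr hlam) hZdist₄
  convert map_comp_eq_of_iIndepFun (f := fun v : Fin 4 → ℝ ↦ v 0 - v 1 + (v 2 - v 3))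
    (by fun_prop) (fun k ↦ by fun_prop) hWmeas hSindep hWindep hSlaw using 2 with ω
  simp [S, block, Finset.sum_add_distrib, Finset.sum_sub_distrib]

/-- Infinite divisibility of the Arete(α,θ,λ) distribution: if
`Z (inl i) ~ Gamma(α/n, θ)`, `Z (inr (inl i)) ~ Gamma(α/n, θ)`,
`Z (inr (inr (inl i))) ~ Gamma(1/n, λ)`, `Z (inr (inr (inr i))) ~ Gamma(1/n, λ)`
are `4n` independent random variables (scale parameters, i.e. rates `θ⁻¹`, `λ⁻¹`),
and `A₁, A₂ ~ Gamma(α, θ)`, `B₁, B₂ ~ Gamma(1, λ)` are 4 independent random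
variables (so that `B₁ - B₂ ~ Laplace(λ)` and `A₁ - A₂ + (B₁ - B₂) ~ Arete(α,θ,λ)`),
then `∑ i, (X_{1i} - X_{2i} + (Y_{1i} - Y_{2i}))` is Arete(α,θ,λ) distributed. -/
theorem arete_infinitely_divisible
    {Ω : Type*} [MeasurableSpace Ω] (P : Measure Ω) [IsProbabilityMeasure P]
    (α θ lam : ℝ) (hα : 0 < α) (hθ : 0 < θ) (hlam : 0 < lam) (n : ℕ) (hn : 0 < n)
    (Z : (Fin n ⊕ Fin n ⊕ Fin n ⊕ Fin n) → Ω → ℝ)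
    (hZmeas : ∀ i, Measurable (Z i))
    (hZindep : iIndepFun Z P)
    (hZdist₁ : ∀ i : Fin n, P.map (Z (Sum.inl i)) = gammaMeasure (α / n) θ⁻¹)
    (hZdist₂ : ∀ i : Fin n, P.map (Z (Sum.inr (Sum.inl i))) = gammaMeasure (α / n) θ⁻¹)
    (hZdist₃ : ∀ i : Fin n,
      P.map (Z (Sum.inr (Sum.inr (Sum.inl i)))) = gammaMeasure (1 / n) lam⁻¹)
    (hZdist₄ : ∀ i : Fin n,
      P.map (Z (Sum.inr (Sum.inr (Sum.inr i)))) = gammaMeasure (1 / n) lam⁻¹)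
    (W : Fin 4 → Ω → ℝ)
    (hWmeas : ∀ i, Measurable (W i))
    (hWindep : iIndepFun W P)
    (hW₀ : P.map (W 0) = gammaMeasure α θ⁻¹)
    (hW₁ : P.map (W 1) = gammaMeasure α θ⁻¹)
    (hW₂ : P.map (W 2) = gammaMeasure 1 lam⁻¹)
    (hW₃ : P.map (W 3) = gammaMeasure 1 lam⁻¹) :
    P.map (fun ω => ∑ i : Fin n,
        (Z (Sum.inl i) ω - Z (Sum.inr (Sum.inl i)) ω +
          (Z (Sum.inr (Sum.inr (Sum.inl i))) ω - Z (Sum.inr (Sum.inr (Sum.inr i))) ω))) =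
    P.map (fun ω => W 0 ω - W 1 ω + (W 2 ω - W 3 ω)) :=
  arete_infinitely_divisible_general P α θ lam hα hθ hlam n hn Z hZmeas hZindep hZdist₁ hZdist₂
    hZdist₃ hZdist₄ W hWmeas hWindep hW₀ hW₁ hW₂ hW₃
end

section
/- Let f_A be the Arete(α,θ,λ) density with λ ≤ Δ/ln 2 and Δ > 0. Then for all t ≥ -Δ/2: f_A(t + Δ) ≥ (1/4) · c_{Δ_Γ} · f_Γ(|t + Δ| + Δ_Γ), where c_{Δ_Γ} = ∫_0^{Δ_Γ} f_Γ(x) dx for any Δ_Γ > 0 and f_Γ is the Gamma(α,θ) density. -/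
/-!
On `x ∈ (0, Δ]` we have `|t + Δ - x| ≤ |t + Δ|`. Since the Gamma density is decreasing for
`α ≤ 1`, restricting the integral defining `f_{Γ-Γ}(s)` to `(0, Δ_Γ]` gives
`f_{Γ-Γ}(s) ≥ c_{Δ_Γ} f_Γ(|s| + Δ_Γ)`, so the convolution is at least `c_{Δ_Γ} f_Γ(|t + Δ| + Δ_Γ)`
times the Laplace mass of `(0, Δ]`, which is `(1 - e^{-Δ/λ})/2 ≥ 1/4` when `λ ≤ Δ / ln 2`.
The convolution integrand is integrable (otherwise its integral would be `0`) because
`f_{Γ-Γ}(s) ≤ f_Γ(|s|) ∫ f_Γ` for `s ≠ 0`.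
-/

open MeasureTheory Set

noncomputable def gammaDensity (α θ x : ℝ) : ℝ :=
  if 0 < x then Real.exp (-x / θ) * x ^ (α - 1) / (Real.Gamma α * θ ^ α) else 0

noncomputable def laplaceDensity (lam x : ℝ) : ℝ := Real.exp (-|x| / lam) / (2 * lam)

/-- If `X` and `Y` are independent with density `f` supported on `(0, ∞)`, this is the density
of `X - Y`. -/
noncomputable def diffDensity (f : ℝ → ℝ) (s : ℝ) : ℝ := ∫ x in Ioi (0 : ℝ), f (|s| + x) * f x

theorem mul_setIntegral_le_integral_mul {X : Type*} [MeasurableSpace X] {μ : Measure X}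
    {g k : X → ℝ} {s : Set X} {m : ℝ} (hg : 0 ≤ g) (hk : 0 ≤ k)
    (hgk : Integrable (fun x => g x * k x) μ) (hks : IntegrableOn k s μ)
    (hm : ∀ᵐ x ∂μ.restrict s, m ≤ g x) :
    m * ∫ x in s, k x ∂μ ≤ ∫ x, g x * k x ∂μ :=
  calc m * ∫ x in s, k x ∂μ = ∫ x in s, m * k x ∂μ := (integral_const_mul _ _).symm
    _ ≤ ∫ x in s, g x * k x ∂μ :=
      integral_mono_ae (hks.const_mul m) hgk.integrableOn
        (hm.mono fun x hx => mul_le_mul_of_nonneg_right hx (hk x))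
    _ ≤ ∫ x, g x * k x ∂μ :=
      setIntegral_le_integral hgk (ae_of_all _ fun x => mul_nonneg (hg x) (hk x))

theorem integrable_comp_abs_of_integrableOn_Ioi {f : ℝ → ℝ} (hf : IntegrableOn f (Ioi 0)) :
    Integrable (fun x => f |x|) := by
  have hIoi : IntegrableOn (fun x => f |x|) (Ioi 0) :=
    hf.congr_fun (fun x hx => by rw [abs_of_pos hx]) measurableSet_Ioi
  have hIic : IntegrableOn (fun x => f |x|) (Iic 0) := by
    have hneg : MeasurableEmbedding fun x : ℝ => -x := (Homeomorph.neg ℝ).measurableEmbedding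
    rw [← Measure.map_neg_eq_self (volume : Measure ℝ), hneg.integrableOn_map_iff]
    simp_rw [Function.comp_def, abs_neg, neg_preimage, neg_Iic, neg_zero]
    exact (integrableOn_Ici_iff_integrableOn_Ioi).2 hIoi
  simpa [← integrableOn_univ, Iic_union_Ioi] using hIic.union hIoi

section DiffDensity

variable {f : ℝ → ℝ}

theorem diffDensity_nonneg (hf0 : ∀ x, 0 ≤ f x) (s : ℝ) : 0 ≤ diffDensity f s :=
  integral_nonneg fun _ => mul_nonneg (hf0 _) (hf0 _)

theorem measurable_diffDensity (hf : Measurable f) : Measurable (diffDensity f) := by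
  have h : StronglyMeasurable (fun p : ℝ × ℝ => f (|p.1| + p.2) * f p.2) :=
    ((hf.comp (measurable_fst.abs.add measurable_snd)).mul (hf.comp measurable_snd)).stronglyMeasurable
  exact (h.integral_prod_right' (ν := volume.restrict (Ioi 0))).measurable

theorem integrableOn_Ioi_comp_add_mul (hf0 : ∀ x, 0 ≤ f x) (hf_anti : AntitoneOn f (Ioi 0))
    (hf_int : IntegrableOn f (Ioi 0)) (hf : Measurable f) {a : ℝ} (ha : 0 < a) :
    IntegrableOn (fun x => f (a + x) * f x) (Ioi 0) := by
  refine (hf_int.const_mul (f a)).mono'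
    ((hf.comp (measurable_const.add measurable_id)).mul hf).aestronglyMeasurable ?_
  refine (ae_restrict_iff' measurableSet_Ioi).2 (ae_of_all _ fun x (hx : 0 < x) => ?_)
  rw [Real.norm_of_nonneg (mul_nonneg (hf0 _) (hf0 _))]
  exact mul_le_mul_of_nonneg_right (hf_anti ha (by simp; linarith) (by linarith)) (hf0 x)

theorem diffDensity_le (hf0 : ∀ x, 0 ≤ f x) (hf_anti : AntitoneOn f (Ioi 0))
    (hf_int : IntegrableOn f (Ioi 0)) (hf : Measurable f) {s : ℝ} (hs : s ≠ 0) :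
    diffDensity f s ≤ f |s| * ∫ x in Ioi 0, f x := by
  have hs0 : 0 < |s| := abs_pos.2 hs
  rw [← integral_const_mul]
  refine setIntegral_mono_on (integrableOn_Ioi_comp_add_mul hf0 hf_anti hf_int hf hs0)
    (hf_int.const_mul _) measurableSet_Ioi fun x (hx : 0 < x) => ?_
  exact mul_le_mul_of_nonneg_right (hf_anti hs0 (by simp; linarith) (by linarith)) (hf0 x)

theorem setIntegral_Ioc_mul_le_diffDensity (hf0 : ∀ x, 0 ≤ f x) (hf_anti : AntitoneOn f (Ioi 0))
    (hf_int : IntegrableOn f (Ioi 0)) (hf : Measurable f) {s r : ℝ} (hs : s ≠ 0) (hsr : |s| ≤ r)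
    (c : ℝ) : (∫ x in Ioc 0 c, f x) * f (r + c) ≤ diffDensity f s := by
  have hs0 : 0 < |s| := abs_pos.2 hs
  have hint := integrableOn_Ioi_comp_add_mul hf0 hf_anti hf_int hf hs0
  rw [← integral_mul_const]
  calc ∫ x in Ioc 0 c, f x * f (r + c) ≤ ∫ x in Ioc 0 c, f (|s| + x) * f x := by
        refine setIntegral_mono_on ((hf_int.mono_set Ioc_subset_Ioi_self).mul_const _)
          (hint.mono_set Ioc_subset_Ioi_self) measurableSet_Ioc fun x hx => ?_
        rw [mul_comm]
        exact mul_le_mul_of_nonneg_right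
          (hf_anti (by simp; linarith [hx.1]) (by simp; linarith [hx.1, hx.2]) (by linarith [hx.2]))
          (hf0 x)
    _ ≤ diffDensity f s :=
        setIntegral_mono_set hint (ae_of_all _ fun _ => mul_nonneg (hf0 _) (hf0 _))
          Ioc_subset_Ioi_self.eventuallyLE

theorem integrable_diffDensity (hf0 : ∀ x, 0 ≤ f x) (hf_anti : AntitoneOn f (Ioi 0))
    (hf_int : IntegrableOn f (Ioi 0)) (hf : Measurable f) : Integrable (diffDensity f) := by
  refine ((integrable_comp_abs_of_integrableOn_Ioi hf_int).mul_const (∫ x in Ioi 0, f x)).mono'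
    (measurable_diffDensity hf).aestronglyMeasurable ?_
  filter_upwards [(countable_singleton (0 : ℝ)).ae_notMem volume] with s hs
  rw [Real.norm_of_nonneg (diffDensity_nonneg hf0 s)]
  exact diffDensity_le hf0 hf_anti hf_int hf hs

end DiffDensity

section Gamma

variable {α θ : ℝ}

theorem gammaDensity_nonneg (hα : 0 < α) (hθ : 0 < θ) (x : ℝ) : 0 ≤ gammaDensity α θ x := by
  unfold gammaDensity
  split_ifs
  · have := Real.Gamma_pos_of_pos hα
    positivity
  · exact le_rfl

theorem antitoneOn_gammaDensity (hα : 0 < α) (hα1 : α ≤ 1) (hθ : 0 < θ) :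
    AntitoneOn (gammaDensity α θ) (Ioi 0) := by
  intro a (ha : 0 < a) b (hb : 0 < b) hab
  have := Real.Gamma_pos_of_pos hα
  simp only [gammaDensity, if_pos ha, if_pos hb]
  have hexp : Real.exp (-b / θ) ≤ Real.exp (-a / θ) := by gcongr
  have hpow : b ^ (α - 1) ≤ a ^ (α - 1) := Real.rpow_le_rpow_of_nonpos ha hab (by linarith)
  gcongr

theorem measurable_gammaDensity : Measurable (gammaDensity α θ) :=
  Measurable.ite measurableSet_Ioi (by fun_prop) measurable_const

theorem integrableOn_gammaDensity (hα : 0 < α) (hθ : 0 < θ) :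
    IntegrableOn (gammaDensity α θ) (Ioi 0) := by
  have h := integrableOn_rpow_mul_exp_neg_mul_rpow (p := 1) (s := α - 1) (b := 1 / θ)
    (by linarith) zero_lt_one (by positivity)
  refine IntegrableOn.congr_fun (h.div_const (Real.Gamma α * θ ^ α)) (fun x (hx : 0 < x) => ?_)
    measurableSet_Ioi
  rw [gammaDensity, if_pos hx, Real.rpow_one]
  ring_nf

end Gamma

section Laplace

variable {lam : ℝ}

theorem continuous_laplaceDensity : Continuous (laplaceDensity lam) := by
  unfold laplaceDensity
  fun_prop

theorem laplaceDensity_nonneg (hlam : 0 ≤ lam) (x : ℝ) : 0 ≤ laplaceDensity lam x := by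
  unfold laplaceDensity
  positivity

theorem laplaceDensity_le (hlam : 0 ≤ lam) (x : ℝ) : laplaceDensity lam x ≤ 1 / (2 * lam) := by
  unfold laplaceDensity
  gcongr
  exact Real.exp_le_one_iff.2 (div_nonpos_of_nonpos_of_nonneg (by simp) hlam)

theorem setIntegral_Ioc_laplaceDensity (hlam : 0 < lam) {Δ : ℝ} (hΔ : 0 ≤ Δ) :
    ∫ x in Ioc 0 Δ, laplaceDensity lam x = (1 - Real.exp (-(Δ / lam))) / 2 := by
  have hcongr : ∫ x in Ioc 0 Δ, laplaceDensity lam x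
      = (∫ x in (0)..Δ, Real.exp (-(x / lam))) / (2 * lam) := by
    rw [intervalIntegral.integral_of_le hΔ, ← integral_div]
    refine setIntegral_congr_fun measurableSet_Ioc fun x hx => ?_
    rw [laplaceDensity, abs_of_pos hx.1, neg_div]
  rw [hcongr, intervalIntegral.integral_comp_div (fun x => Real.exp (-x)) hlam.ne',
    intervalIntegral.integral_comp_neg (fun x => Real.exp x), integral_exp]
  field_simp
  simp

theorem quarter_le_setIntegral_Ioc_laplaceDensity (hlam : 0 < lam) {Δ : ℝ}
    (hΔ : lam * Real.log 2 ≤ Δ) : 1 / 4 ≤ ∫ x in Ioc 0 Δ, laplaceDensity lam x := by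
  have hlog : Real.log 2 ≤ Δ / lam := by rwa [le_div_iff₀ hlam, mul_comm]
  have hexp : Real.exp (-(Δ / lam)) ≤ 1 / 2 :=
    calc Real.exp (-(Δ / lam)) ≤ Real.exp (-Real.log 2) := Real.exp_le_exp.2 (by linarith)
      _ = 1 / 2 := by rw [Real.exp_neg, Real.exp_log two_pos, one_div]
  rw [setIntegral_Ioc_laplaceDensity hlam
    (le_trans (by have := Real.log_pos one_lt_two; positivity) hΔ)]
  linarith

end Laplace

theorem arete_density_lower_bound_general (α θ lam Δ : ℝ)
    (hα : 0 < α) (hα1 : α ≤ 1) (hθ : 0 < θ) (hlam : 0 < lam)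
    (hlamΔ : lam ≤ Δ / Real.log 2) :
    let fΓ : ℝ → ℝ := fun x =>
      if 0 < x then Real.exp (-x / θ) * x ^ (α - 1) / (Real.Gamma α * θ ^ α) else 0
    let fGG : ℝ → ℝ := fun t => ∫ x in Ioi (0 : ℝ), fΓ (|t| + x) * fΓ x
    let fL : ℝ → ℝ := fun x => Real.exp (-|x| / lam) / (2 * lam)
    let fA : ℝ → ℝ := fun t => ∫ x : ℝ, fGG (t - x) * fL x
    ∀ t : ℝ, -Δ / 2 ≤ t → ∀ ΔΓ : ℝ, 0 < ΔΓ →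
      (1 / 4) * (∫ x in Ioc (0 : ℝ) ΔΓ, fΓ x) * fΓ (|t + Δ| + ΔΓ) ≤ fA (t + Δ) := by
  intro fΓ fGG fL fA t ht ΔΓ _
  show 1 / 4 * (∫ x in Ioc 0 ΔΓ, gammaDensity α θ x) * gammaDensity α θ (|t + Δ| + ΔΓ)
    ≤ ∫ x, diffDensity (gammaDensity α θ) (t + Δ - x) * laplaceDensity lam x
  have hf0 := gammaDensity_nonneg hα hθ
  have hf_anti := antitoneOn_gammaDensity hα hα1 hθ
  have hf_int := integrableOn_gammaDensity hα hθ
  have hfL0 := laplaceDensity_nonneg hlam.le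
  set K := (∫ x in Ioc 0 ΔΓ, gammaDensity α θ x) * gammaDensity α θ (|t + Δ| + ΔΓ)
  have hK : 0 ≤ K := mul_nonneg (setIntegral_nonneg measurableSet_Ioc fun x _ => hf0 x) (hf0 _)
  have hmass := quarter_le_setIntegral_Ioc_laplaceDensity hlam
    ((le_div_iff₀ (Real.log_pos one_lt_two)).1 hlamΔ)
  -- On `(0, Δ]` the argument `t + Δ - x` has modulus at most `|t + Δ|` because `t + Δ ≥ Δ / 2`.
  have hlower : ∀ᵐ x ∂volume.restrict (Ioc 0 Δ), K ≤ diffDensity (gammaDensity α θ) (t + Δ - x) := by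
    filter_upwards [ae_restrict_mem measurableSet_Ioc,
      ae_restrict_of_ae ((countable_singleton (t + Δ)).ae_notMem volume)] with x hx hxT
    refine setIntegral_Ioc_mul_le_diffDensity hf0 hf_anti hf_int measurable_gammaDensity
      (sub_ne_zero.2 (Ne.symm hxT)) (abs_le.2 ⟨?_, ?_⟩) ΔΓ
    · linarith [le_abs_self (t + Δ), hx.2]
    · linarith [le_abs_self (t + Δ), hx.1]
  have hint : Integrable fun x => diffDensity (gammaDensity α θ) (t + Δ - x) * laplaceDensity lam x :=
    ((integrable_diffDensity hf0 hf_anti hf_int measurable_gammaDensity).comp_sub_left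
      (t + Δ)).mul_bdd continuous_laplaceDensity.aestronglyMeasurable
      (ae_of_all _ fun x => by
        rw [Real.norm_of_nonneg (hfL0 x)]; exact laplaceDensity_le hlam.le x)
  calc _ = K * (1 / 4) := by rw [mul_assoc, mul_comm]
    _ ≤ K * ∫ x in Ioc 0 Δ, laplaceDensity lam x := mul_le_mul_of_nonneg_left hmass hK
    _ ≤ _ := mul_setIntegral_le_integral_mul (fun x => diffDensity_nonneg hf0 _) hfL0
        hint continuous_laplaceDensity.integrableOn_Ioc hlower

/-- Lower bound on the Arete density: if `λ ≤ Δ/ln 2`, `Δ > 0`, then for all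
`t ≥ -Δ/2` and any `Δ_Γ > 0`,
`f_A(t + Δ) ≥ (1/4) · c_{Δ_Γ} · f_Γ(|t+Δ| + Δ_Γ)` where
`c_{Δ_Γ} = ∫_0^{Δ_Γ} f_Γ(x) dx`. -/
theorem arete_density_lower_bound (α θ lam Δ : ℝ)
    (hα : 0 < α) (hα1 : α ≤ 1) (hθ : 0 < θ) (hlam : 0 < lam) (hΔ : 0 < Δ)
    (hlamΔ : lam ≤ Δ / Real.log 2) :
    let fΓ : ℝ → ℝ := fun x =>
      if 0 < x then Real.exp (-x / θ) * x ^ (α - 1) / (Real.Gamma α * θ ^ α) else 0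
    let fGG : ℝ → ℝ := fun t => ∫ x in Ioi (0 : ℝ), fΓ (|t| + x) * fΓ x
    let fL : ℝ → ℝ := fun x => Real.exp (-|x| / lam) / (2 * lam)
    let fA : ℝ → ℝ := fun t => ∫ x : ℝ, fGG (t - x) * fL x
    ∀ t : ℝ, -Δ / 2 ≤ t → ∀ ΔΓ : ℝ, 0 < ΔΓ →
      (1 / 4) * (∫ x in Ioc (0 : ℝ) ΔΓ, fΓ x) * fΓ (|t + Δ| + ΔΓ) ≤ fA (t + Δ) :=
  arete_density_lower_bound_general α θ lam Δ hα hα1 hθ hlam hlamΔ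
end

section
/- Let f : ℝ → ℝ_{>0} be a density that is symmetric around 0, monotonically decreasing in |t|, and satisfies f(t)/f(t+a) ≤ e^{ε} for all t ∈ ℝ and |a| ≤ Δ. Then the additive-noise mechanism M(x) = q(x) + Z, where Z has density f and q has sensitivity at most Δ, is ε-differentially private: for all neighboring inputs x, x' and all measurable S ⊆ ℝ, P[M(x) ∈ S] ≤ e^{ε} P[M(x') ∈ S]. -/
/-!
Translating a measure with density `g` by `c` gives the measure with density `g (· - c)`,
by translation invariance of Lebesgue measure. The outputs on neighbouring inputs thus have
densities `f (t - q x)` and `f (t - q x')`, whose shifts differ by `|q x - q x'| ≤ Δ`; the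
ratio bound on `f` compares them pointwise up to the factor `e^ε`, and integrating over `S`
gives the privacy inequality.
-/

open MeasureTheory

theorem MeasureTheory.MeasurePreserving.map_withDensity {α β : Type*} [MeasurableSpace α]
    [MeasurableSpace β] {μ : Measure α} {ν : Measure β} {e : α ≃ᵐ β}
    (he : MeasurePreserving e μ ν) (g : α → ENNReal) :
    (μ.withDensity g).map e = ν.withDensity (g ∘ e.symm) := by
  ext s hs
  rw [Measure.map_apply e.measurable hs, withDensity_apply _ (e.measurable hs),
    withDensity_apply _ hs, ← he.setLIntegral_comp_preimage_emb e.measurableEmbedding]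
  simp

theorem map_add_left_withDensity {G : Type*} [AddGroup G] [MeasurableSpace G]
    [MeasurableAdd G] (μ : Measure G) [μ.IsAddLeftInvariant] (g : G → ENNReal) (c : G) :
    (μ.withDensity g).map (c + ·) = μ.withDensity (fun t => g (-c + t)) :=
  (measurePreserving_add_left μ c).map_withDensity (e := MeasurableEquiv.addLeft c) g

theorem le_exp_mul_of_div_le {f : ℝ → ℝ} {ε Δ : ℝ} (hpos : ∀ t, 0 < f t)
    (hratio : ∀ t a : ℝ, |a| ≤ Δ → f t / f (t + a) ≤ Real.exp ε) {t a : ℝ} (ha : |a| ≤ Δ) :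
    f t ≤ Real.exp ε * f (t + a) :=
  (div_le_iff₀ (hpos _)).1 (hratio t a ha)

theorem arete_mechanism_dp_general {X : Type*} (Neighbor : X → X → Prop)
    (q : X → ℝ) (f : ℝ → ℝ) (ε Δ : ℝ)
    (hpos : ∀ t : ℝ, 0 < f t)
    (hratio : ∀ t a : ℝ, |a| ≤ Δ → f t / f (t + a) ≤ Real.exp ε)
    (hsens : ∀ x x' : X, Neighbor x x' → |q x - q x'| ≤ Δ) :
    ∀ x x' : X, Neighbor x x' → ∀ S : Set ℝ, MeasurableSet S →
      (volume.withDensity (fun t => ENNReal.ofReal (f t))).map (fun z => q x + z) S ≤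
        ENNReal.ofReal (Real.exp ε) *
          (volume.withDensity (fun t => ENNReal.ofReal (f t))).map (fun z => q x' + z) S := by
  intro x x' hx S _
  have hdens : ∀ t, ENNReal.ofReal (f (-q x + t)) ≤
      ENNReal.ofReal (Real.exp ε) * ENNReal.ofReal (f (-q x' + t)) := fun t => by
    rw [← ENNReal.ofReal_mul (Real.exp_pos ε).le]
    refine ENNReal.ofReal_le_ofReal ?_
    convert le_exp_mul_of_div_le hpos hratio (hsens x x' hx) using 3
    ring
  have hle : (volume.withDensity (fun t => ENNReal.ofReal (f t))).map (q x + ·) ≤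
      ENNReal.ofReal (Real.exp ε) •
        (volume.withDensity (fun t => ENNReal.ofReal (f t))).map (q x' + ·) := by
    rw [map_add_left_withDensity, map_add_left_withDensity,
      ← withDensity_smul' _ _ ENNReal.ofReal_ne_top]
    exact withDensity_mono (ae_of_all _ hdens)
  exact hle S

/-- ε-differential privacy of the additive-noise mechanism: if the noise density
`f` is positive, symmetric around 0, monotonically decreasing in `|t|`, and
satisfies `f(t)/f(t+a) ≤ e^ε` for all `t` and `|a| ≤ Δ`, and the query `q` has
sensitivity at most `Δ` over neighboring inputs, then the mechanism
`M(x) = q(x) + Z`, where `Z` has density `f` with respect to Lebesgue measure,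
satisfies `P[M(x) ∈ S] ≤ e^ε · P[M(x') ∈ S]` for all neighboring `x, x'` and
all measurable `S`. -/
theorem arete_mechanism_dp {X : Type*} (Neighbor : X → X → Prop)
    (q : X → ℝ) (f : ℝ → ℝ) (ε Δ : ℝ) (hΔ : 0 < Δ) (hε : 0 < ε)
    (hfmeas : Measurable f)
    (hpos : ∀ t : ℝ, 0 < f t)
    (hsym : ∀ t : ℝ, f t = f (-t))
    (hmono : ∀ t t' : ℝ, |t| ≤ |t'| → f t' ≤ f t)
    (hdensity : ∫ t : ℝ, f t = 1)
    (hratio : ∀ t a : ℝ, |a| ≤ Δ → f t / f (t + a) ≤ Real.exp ε)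
    (hsens : ∀ x x' : X, Neighbor x x' → |q x - q x'| ≤ Δ) :
    ∀ x x' : X, Neighbor x x' → ∀ S : Set ℝ, MeasurableSet S →
      (volume.withDensity (fun t => ENNReal.ofReal (f t))).map (fun z => q x + z) S ≤
        ENNReal.ofReal (Real.exp ε) *
          (volume.withDensity (fun t => ENNReal.ofReal (f t))).map (fun z => q x' + z) S :=
  arete_mechanism_dp_general Neighbor q f ε Δ hpos hratio hsens
end
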